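/- Let H = (V,E) be a finite contextuality scenario and 𝒮 ⊆ V a set of pairwise exclusive events. If p is an almost quantum model on H (there is a finite-dimensional Hilbert space, density operator ρ, and projections P_v with ∑_{v∈e} P_v ≤ 1 for all e ∈ E and p(v) = tr(P_v ρ)), then ∑_{v∈𝒮} p(v) ≤ 1. That is, almost quantum models satisfy all CE inequalities. -/

import Mathlib

/-!
Two exclusive events `u, v` lie in a common hyperedge, so `P u + P v ≤ 1`; for projections this
forces `P u * P v = 0`. The projections of a pairwise exclusive set are therefore mutually
orthogonal, their sum is again a projection and hence `≤ 1`, and pairing with the state `ρ`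
(a monotone operation) gives `∑ p v ≤ tr ρ = 1`.
-/

open scoped ComplexOrder

namespace IsStarProjection

section CStarAlgebra

variable {A : Type*} [CStarAlgebra A] [PartialOrder A] [StarOrderedRing A] {p q : A}

theorem mul_eq_zero_of_add_le_one (hp : IsStarProjection p) (hq : IsStarProjection q)
    (h : p + q ≤ 1) : p * q = 0 := by
  have hle : p ≤ 1 - q := le_sub_iff_add_le.mpr h
  have hpq : p * (1 - q) = p := (hp.le_iff_mul_eq_left hq.one_sub).mp hle
  rwa [mul_sub, mul_one, sub_eq_self] at hpq

end CStarAlgebra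

theorem sum_of_pairwise_mul_eq_zero {R ι : Type*} [NonUnitalSemiring R] [StarRing R]
    {s : Finset ι} {p : ι → R} (hp : ∀ i ∈ s, IsStarProjection (p i))
    (horth : (s : Set ι).Pairwise fun i j ↦ p i * p j = 0) :
    IsStarProjection (∑ i ∈ s, p i) := by
  classical
  induction s using Finset.induction_on with
  | empty => rw [Finset.sum_empty]; exact .zero _
  | insert a s ha ih =>
    rw [Finset.coe_insert, Set.pairwise_insert] at horth
    rw [Finset.sum_insert ha]
    refine (hp a (s.mem_insert_self a)).add
      (ih (fun i hi ↦ hp i (Finset.mem_insert_of_mem hi)) horth.1) ?_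
    rw [Finset.mul_sum]
    exact Finset.sum_eq_zero fun i hi ↦ (horth.2 i hi (ne_of_mem_of_not_mem hi ha).symm).1

end IsStarProjection

section Exclusivity

variable {A V : Type*} [CStarAlgebra A] [PartialOrder A] [StarOrderedRing A]

theorem sum_le_one_of_pairwise_exclusive {E : Finset (Finset V)} {S : Finset V} {P : V → A}
    (hP : ∀ v, IsStarProjection (P v)) (hE : ∀ e ∈ E, ∑ v ∈ e, P v ≤ 1)
    (hS : ∀ u ∈ S, ∀ v ∈ S, u ≠ v → ∃ e ∈ E, u ∈ e ∧ v ∈ e) :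
    ∑ v ∈ S, P v ≤ 1 := by
  classical
  refine (IsStarProjection.sum_of_pairwise_mul_eq_zero (fun v _ ↦ hP v) ?_).le_one
  intro u hu v hv huv
  obtain ⟨e, he, hue, hve⟩ := hS u hu v hv huv
  refine (hP u).mul_eq_zero_of_add_le_one (hP v) ?_
  calc P u + P v = ∑ w ∈ {u, v}, P w := (Finset.sum_pair huv).symm
    _ ≤ ∑ w ∈ e, P w := Finset.sum_le_sum_of_subset_of_nonneg
        (Finset.insert_subset hue (Finset.singleton_subset_iff.mpr hve))
        fun w _ _ ↦ (hP w).nonneg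
    _ ≤ 1 := hE e he

end Exclusivity

namespace Matrix

-- `Matrix.Norms.L2Operator` supplies the C⋆-algebra structure on `Matrix n n ℂ`.
open scoped MatrixOrder Matrix.Norms.L2Operator

variable {n : Type*} [Fintype n] [DecidableEq n]

theorem PosSemidef.trace_mul_nonneg {A ρ : Matrix n n ℂ} (hA : A.PosSemidef)
    (hρ : ρ.PosSemidef) : 0 ≤ (A * ρ).trace := by
  obtain ⟨C, rfl⟩ := CStarAlgebra.nonneg_iff_eq_star_mul_self.mp hA.nonneg
  rw [Matrix.mul_assoc, trace_mul_comm]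
  exact (hρ.mul_mul_conjTranspose_same C).trace_nonneg

theorem trace_mul_le_trace_mul_of_le {A B ρ : Matrix n n ℂ} (hρ : ρ.PosSemidef) (h : A ≤ B) :
    (A * ρ).trace ≤ (B * ρ).trace := by
  simpa [sub_mul] using h.trace_mul_nonneg hρ

end Matrix

theorem almost_quantum_model_satisfies_CE_general {V : Type*}
    (E : Finset (Finset V)) (S : Finset V)
    (hexc : ∀ u ∈ S, ∀ v ∈ S, u ≠ v → ∃ e ∈ E, u ∈ e ∧ v ∈ e)
    (n : ℕ) (ρ : Matrix (Fin n) (Fin n) ℂ)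
    (hρ : ρ.PosSemidef) (htr : ρ.trace = 1)
    (P : V → Matrix (Fin n) (Fin n) ℂ)
    (hPh : ∀ v, (P v).IsHermitian) (hP2 : ∀ v, P v * P v = P v)
    (hsub : ∀ e ∈ E, ((1 : Matrix (Fin n) (Fin n) ℂ) - ∑ v ∈ e, P v).PosSemidef)
    (p : V → ℝ) (hp : ∀ v, (p v : ℂ) = (P v * ρ).trace) :
    ∑ v ∈ S, p v ≤ 1 := by
  have hP (v : V) : IsStarProjection (P v) := ⟨hP2 v, hPh v⟩
  -- Under `MatrixOrder`, `A ≤ B` unfolds to `(B - A).PosSemidef`, which is the form of `hsub`.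
  open scoped MatrixOrder Matrix.Norms.L2Operator in
  have hS : ∑ v ∈ S, P v ≤ 1 := sum_le_one_of_pairwise_exclusive hP hsub hexc
  have htrace := Matrix.trace_mul_le_trace_mul_of_le hρ hS
  rw [Finset.sum_mul, Matrix.trace_sum, Matrix.one_mul, htr] at htrace
  exact_mod_cast (by simpa only [← hp, Complex.ofReal_sum] using htrace :
    ((∑ v ∈ S, p v : ℝ) : ℂ) ≤ 1)

/-- Almost quantum models satisfy all CE inequalities. -/
theorem almost_quantum_model_satisfies_CE {V : Type*} [Fintype V] [DecidableEq V]
    (E : Finset (Finset V)) (S : Finset V)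
    (hexc : ∀ u ∈ S, ∀ v ∈ S, u ≠ v → ∃ e ∈ E, u ∈ e ∧ v ∈ e)
    (n : ℕ) (ρ : Matrix (Fin n) (Fin n) ℂ)
    (hρ : ρ.PosSemidef) (htr : ρ.trace = 1)
    (P : V → Matrix (Fin n) (Fin n) ℂ)
    (hPh : ∀ v, (P v).IsHermitian) (hP2 : ∀ v, P v * P v = P v)
    (hsub : ∀ e ∈ E, ((1 : Matrix (Fin n) (Fin n) ℂ) - ∑ v ∈ e, P v).PosSemidef)
    (p : V → ℝ) (hp : ∀ v, (p v : ℂ) = (P v * ρ).trace) :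
    ∑ v ∈ S, p v ≤ 1 :=
  almost_quantum_model_satisfies_CE_general E S hexc n ρ hρ htr P hPh hP2 hsub p hp
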